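/- Every separable, metrizable, zero-dimensional topological space admits a compatible ultrametric (which may be taken bounded by 1). Moreover, if the space is Polish (separable and completely metrizable), it admits a compatible complete ultrametric. -/

import Mathlib

open Set TopologicalSpace Filter Topology

/-!
For each `n`, the clopen sets of diameter `< 2⁻ⁿ` form an open cover, which has a countable
subcover; taking for each point the first member containing it refines the subcover into a
countable clopen partition. Coding each point by the sequence of its pieces embeds `X` into the
Baire space `ℕ → ℕ`, whose first-difference metric `2^(-min {n | p n ≠ q n})` is an ultrametric
bounded by `1`, and we pull it back. If `X` is complete, a filter whose codes converge is Cauchy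
in `X` (agreeing `n`-th codes force distance `< 2⁻ⁿ`), so the image is closed and the pulled-back
metric is complete.
-/

theorem exists_continuous_nat_mem_of_iUnion_clopen_eq_univ {X : Type*} [TopologicalSpace X]
    {g : ℕ → Set X} (hg : ∀ k, IsClopen (g k)) (hcov : ⋃ k, g k = univ) :
    ∃ c : X → ℕ, Continuous c ∧ ∀ x, x ∈ g (c x) := by
  classical
  have hmem : ∀ x, ∃ k, x ∈ g k := fun x => mem_iUnion.1 (hcov ▸ mem_univ x)
  refine ⟨fun x => Nat.find (hmem x), continuous_discrete_rng.2 fun k => ?_,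
    fun x => Nat.find_spec (hmem x)⟩
  have hfiber : (fun x => Nat.find (hmem x)) ⁻¹' {k} = g k \ ⋃ j ∈ Finset.range k, g j := by
    ext x
    simp [Nat.find_eq_iff]
  rw [hfiber]
  exact (hg k).isOpen.sdiff (isClosed_biUnion_finset fun j _ => (hg j).isClosed)

theorem exists_nat_clopen_cover_dist_lt {X : Type*} [PseudoMetricSpace X]
    [SecondCountableTopology X] (hzero : IsTopologicalBasis {s : Set X | IsClopen s})
    {ε : ℝ} (hε : 0 < ε) :
    ∃ g : ℕ → Set X, (∀ k, IsClopen (g k)) ∧ (∀ k, ∀ x ∈ g k, ∀ y ∈ g k, dist x y < ε) ∧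
      ⋃ k, g k = univ := by
  set S := {s : Set X | IsClopen s ∧ ∀ x ∈ s, ∀ y ∈ s, dist x y < ε}
  have hS : ⋃₀ S = univ := by
    refine eq_univ_of_forall fun x => ?_
    obtain ⟨s, hs, hxs, hsub⟩ := hzero.exists_subset_of_mem_open
      (Metric.mem_ball_self (half_pos hε)) Metric.isOpen_ball
    refine ⟨s, ⟨hs, fun y hy z hz => ?_⟩, hxs⟩
    calc dist y z ≤ dist y x + dist x z := dist_triangle _ _ _
      _ < ε / 2 + ε / 2 := add_lt_add (Metric.mem_ball.1 (hsub hy)) (Metric.mem_ball'.1 (hsub hz))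
      _ = ε := add_halves ε
  obtain ⟨T, hTc, hTS, hTU⟩ := isOpen_sUnion_countable S fun s hs => hs.1.isOpen
  -- `∅ ∈ S`, so adding it lets us enumerate `T` by `ℕ` even when `T` is empty
  obtain ⟨g, hg⟩ := (hTc.insert ∅).exists_eq_range (insert_nonempty _ _)
  have hgS : ∀ k, g k ∈ S := fun k =>
    insert_subset (show ∅ ∈ S from ⟨isClopen_empty, by simp⟩) hTS (hg ▸ mem_range_self k)
  refine ⟨g, fun k => (hgS k).1, fun k => (hgS k).2, ?_⟩
  rw [← sUnion_range, ← hg, sUnion_insert, empty_union, hTU, hS]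

theorem exists_seq_continuous_nat_eq_imp_dist_lt {X : Type*} [PseudoMetricSpace X]
    [SecondCountableTopology X] (hzero : IsTopologicalBasis {s : Set X | IsClopen s}) :
    ∃ c : ℕ → X → ℕ, (∀ n, Continuous (c n)) ∧
      ∀ ε > 0, ∃ n, ∀ x y, c n x = c n y → dist x y < ε := by
  have hcode : ∀ n : ℕ, ∃ c : X → ℕ, Continuous c ∧
      ∀ x y, c x = c y → dist x y < (1 / 2) ^ n := by
    intro n
    obtain ⟨g, hg, hsmall, hcov⟩ := exists_nat_clopen_cover_dist_lt hzero (pow_pos one_half_pos n)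
    obtain ⟨c, hc, hmem⟩ := exists_continuous_nat_mem_of_iUnion_clopen_eq_univ hg hcov
    exact ⟨c, hc, fun x y hxy => hsmall _ x (hmem x) y (hxy ▸ hmem y)⟩
  choose c hc hsmall using hcode
  refine ⟨c, hc, fun ε hε => ?_⟩
  obtain ⟨n, hn⟩ := exists_pow_lt_of_lt_one hε one_half_lt_one
  exact ⟨n, fun x y hxy => (hsmall n x y hxy).trans hn⟩

section Coding

variable {X : Type*} [MetricSpace X] {E : ℕ → Type*} [∀ n, TopologicalSpace (E n)]
  [∀ n, DiscreteTopology (E n)] {c : ∀ n, X → E n}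

theorem isEmbedding_of_forall_eq_imp_dist_lt (hc : ∀ n, Continuous (c n))
    (hsmall : ∀ ε > 0, ∃ n, ∀ x y, c n x = c n y → dist x y < ε) :
    IsEmbedding fun x n => c n x := by
  have hinj : Function.Injective fun x n => c n x := fun x y hxy =>
    eq_of_forall_dist_le fun ε hε =>
      let ⟨n, hn⟩ := hsmall ε hε
      (hn x y (congrFun hxy n)).le
  refine ⟨isInducing_iff_nhds.2 fun x =>
    le_antisymm ((continuous_pi hc).tendsto x).le_comap ?_, hinj⟩
  refine Metric.nhds_basis_ball.ge_iff.2 fun ε hε => ?_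
  obtain ⟨n, hn⟩ := hsmall ε hε
  exact ⟨{p | p n = c n x}, ((isOpen_discrete {c n x}).preimage (continuous_apply n)).mem_nhds rfl,
    fun y hy => Metric.mem_ball.2 (hn y x hy)⟩

theorem isClosed_range_of_forall_eq_imp_dist_lt [CompleteSpace X] (hc : ∀ n, Continuous (c n))
    (hsmall : ∀ ε > 0, ∃ n, ∀ x y, c n x = c n y → dist x y < ε) :
    IsClosed (range fun x n => c n x) := by
  refine isClosed_of_closure_subset fun p hp => ?_
  set F := comap (fun x n => c n x) (𝓝 p)
  have hF : F.NeBot := comap_neBot_iff.2 fun t ht => by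
    obtain ⟨_, hqt, x, rfl⟩ := mem_closure_iff_nhds.1 hp t ht
    exact ⟨x, hqt⟩
  have hcauchy : Cauchy F := Metric.cauchy_iff.2 ⟨hF, fun ε hε => by
    obtain ⟨n, hn⟩ := hsmall ε hε
    exact ⟨_, preimage_mem_comap (((isOpen_discrete {p n}).preimage (continuous_apply n)).mem_nhds
      rfl), fun x hx y hy => hn x y (hx.trans hy.symm)⟩⟩
  obtain ⟨x, hx⟩ := CompleteSpace.complete hcauchy
  exact ⟨x, tendsto_nhds_unique (((continuous_pi hc).tendsto x).mono_left hx) tendsto_comap⟩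

end Coding

theorem exists_ultrametric_le_one_of_isTopologicalBasis_isClopen {X : Type*} [mX : MetricSpace X]
    [SecondCountableTopology X] (hzero : IsTopologicalBasis {s : Set X | IsClopen s}) :
    ∃ m : MetricSpace X,
      m.toUniformSpace.toTopologicalSpace = mX.toUniformSpace.toTopologicalSpace ∧
      (∀ x y z : X, m.toDist.dist x z ≤ max (m.toDist.dist x y) (m.toDist.dist y z)) ∧
      (∀ x y : X, m.toDist.dist x y ≤ 1) ∧
      (@CompleteSpace X mX.toUniformSpace → @CompleteSpace X m.toUniformSpace) := by
  obtain ⟨c, hc, hsmall⟩ := exists_seq_continuous_nat_eq_imp_dist_lt hzero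
  have hf := isEmbedding_of_forall_eq_imp_dist_lt hc hsmall
  -- its uniformity is the product one, for which `ℕ → ℕ` is complete
  let : MetricSpace (ℕ → ℕ) := PiNat.metricSpaceNatNat
  refine ⟨MetricSpace.induced _ hf.injective inferInstance, hf.eq_induced.symm,
    fun x y z => PiNat.dist_triangle_nonarch _ _ _, fun x y => PiNat.dist_le_one _ _,
    fun hX => ?_⟩
  have hclosed := isClosed_range_of_forall_eq_imp_dist_lt hc hsmall
  let := MetricSpace.induced _ hf.injective inferInstance
  exact (completeSpace_iff_isComplete_range ⟨rfl⟩).2 hclosed.isComplete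

/-- Every separable, metrizable, zero-dimensional topological space admits a
compatible ultrametric bounded by `1`; if moreover the space is Polish, it
admits a compatible complete ultrametric (bounded by `1`). -/
theorem exists_compatible_ultrametric
    {X : Type*} [t : TopologicalSpace X] [SeparableSpace X] [MetrizableSpace X]
    (hzero : IsTopologicalBasis {s : Set X | IsClopen s}) :
    (∃ m : MetricSpace X,
      m.toUniformSpace.toTopologicalSpace = t ∧
      (∀ x y z : X, m.toDist.dist x z ≤ max (m.toDist.dist x y) (m.toDist.dist y z)) ∧
      (∀ x y : X, m.toDist.dist x y ≤ 1)) ∧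
    (PolishSpace X →
      ∃ m : MetricSpace X,
        m.toUniformSpace.toTopologicalSpace = t ∧
        (∀ x y z : X, m.toDist.dist x z ≤ max (m.toDist.dist x y) (m.toDist.dist y z)) ∧
        (∀ x y : X, m.toDist.dist x y ≤ 1) ∧
        @CompleteSpace X m.toUniformSpace) := by
  constructor
  · let := metrizableSpaceMetric X
    have := UniformSpace.secondCountable_of_separable X
    obtain ⟨m, hm, hultra, hle, -⟩ := exists_ultrametric_le_one_of_isTopologicalBasis_isClopen hzero
    exact ⟨m, hm, hultra, hle⟩
  · intro _
    let := completelyMetrizableMetric X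
    have := UniformSpace.secondCountable_of_separable X
    obtain ⟨m, hm, hultra, hle, hcomplete⟩ :=
      exists_ultrametric_le_one_of_isTopologicalBasis_isClopen hzero
    exact ⟨m, hm, hultra, hle, hcomplete (complete_completelyMetrizableMetric X)⟩
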